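/- arXiv:2502.08873 — 3 statements merged into one kernel-verified Lean document; each statement's English description precedes it below -/
import Mathlib

section
/- Let G be a finite connected weighted undirected graph and let μ, ν ∈ P(V) with μ ≠ ν. Then C_1(μ,ν) = 1 / B_{w^{−1},∞}(μ,ν); that is, ( inf { Σ_{{i,j}∈E} w_{ij}|φ_i − φ_j| : φ ∈ ℝ^n, φᵀ(μ−ν) = 1 } ) · ( inf { max_{e∈E} w_e^{−1} |J_e| : J ∈ ℝ^E, BJ = μ − ν } ) = 1. -/
/-!
Both infima are optimal values of a pair of dual convex programs over the incidence matrix `B`: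
the weighted sup norm of a flow `J` with `B J = μ - ν`, and the weighted `ℓ¹` norm of `φ ᵥ* B`
under `φ ⬝ᵥ (μ - ν) = 1`. Weak duality is Hölder's inequality applied to
`1 = φ ⬝ᵥ B J = (φ ᵥ* B) ⬝ᵥ J`. For strong duality, if every feasible flow has norm `> c`, then
`μ - ν` lies outside the image under `B` of the compact convex box of norm `≤ c`; a separating
functional `φ`, tested against the weighted sign vector of `φ ᵥ* B`, gives
`c ‖φ ᵥ* B‖ < φ ⬝ᵥ (μ - ν)`. Connectivity makes every zero-sum vector, in particular `μ - ν`,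
the divergence `B J` of some flow.
-/

open Matrix

lemma sInf_mul_sInf_eq_one_of_duality {S T : Set ℝ} (hS : S.Nonempty) (hT : T.Nonempty)
    (hT₀ : ∀ b ∈ T, 0 ≤ b) (hweak : ∀ a ∈ S, ∀ b ∈ T, 1 ≤ a * b)
    (hstrong : ∀ c, 0 < c → (∀ b ∈ T, c < b) → ∃ a ∈ S, c * a < 1) :
    sInf S * sInf T = 1 := by
  obtain ⟨a₀, ha₀⟩ := hS
  obtain ⟨b₀, hb₀⟩ := hT
  have hS_pos : ∀ a ∈ S, 0 < a := fun a ha => by nlinarith [hweak a ha b₀ hb₀, hT₀ b₀ hb₀]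
  have hT_ge : ∀ a ∈ S, a⁻¹ ≤ sInf T := fun a ha =>
    le_csInf ⟨b₀, hb₀⟩ fun b hb => (inv_le_iff_one_le_mul₀' (hS_pos a ha)).2 (hweak a ha b hb)
  have hT_pos : 0 < sInf T := (inv_pos.2 (hS_pos a₀ ha₀)).trans_le (hT_ge a₀ ha₀)
  have hS_ge : (sInf T)⁻¹ ≤ sInf S :=
    le_csInf ⟨a₀, ha₀⟩ fun a ha => inv_le_of_inv_le₀ (hS_pos a ha) (hT_ge a ha)
  have hS_le : sInf S ≤ (sInf T)⁻¹ := by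
    by_contra! h
    have hc : (sInf S)⁻¹ < sInf T := inv_lt_of_inv_lt₀ hT_pos h
    have hS_pos' : 0 < sInf S := (inv_pos.2 hT_pos).trans h
    obtain ⟨a, ha, hca⟩ := hstrong _ (inv_pos.2 hS_pos')
      fun b hb => hc.trans_le (csInf_le ⟨0, hT₀⟩ hb)
    have ha_lt : a < sInf S := by rwa [inv_mul_lt_one₀ hS_pos'] at hca
    exact ha_lt.not_ge (csInf_le ⟨0, fun a ha => (hS_pos a ha).le⟩ ha)
  rw [le_antisymm hS_le hS_ge, inv_mul_cancel₀ hT_pos.ne']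

lemma exists_dotProduct_lt_of_notMem {V : Type*} [Fintype V] {S : Set (V → ℝ)} {u : V → ℝ}
    (hconv : Convex ℝ S) (hclosed : IsClosed S) (hu : u ∉ S) :
    ∃ φ : V → ℝ, ∀ x ∈ S, φ ⬝ᵥ x < φ ⬝ᵥ u := by
  classical
  obtain ⟨f, r, hS, hr⟩ := geometric_hahn_banach_closed_point hconv hclosed hu
  have hf : ∀ x, f x = (fun i => f fun j => if i = j then 1 else 0) ⬝ᵥ x := fun x => by
    simpa [dotProduct, mul_comm] using LinearMap.pi_apply_eq_sum_univ f.toLinearMap x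
  exact ⟨_, fun x hx => by rw [← hf, ← hf]; exact (hS x hx).trans hr⟩

section WeightedSupNorm

variable {ι : Type*} {w : ι → ℝ}

noncomputable def weightedSupNorm (w J : ι → ℝ) : ℝ := ⨆ e, (w e)⁻¹ * |J e|

lemma weightedSupNorm_nonneg (hw : ∀ e, 0 < w e) (J : ι → ℝ) : 0 ≤ weightedSupNorm w J :=
  Real.iSup_nonneg fun e => mul_nonneg (inv_nonneg.2 (hw e).le) (abs_nonneg _)

lemma abs_le_mul_weightedSupNorm [Finite ι] (hw : ∀ e, 0 < w e) (J : ι → ℝ) (e : ι) :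
    |J e| ≤ w e * weightedSupNorm w J :=
  (inv_mul_le_iff₀ (hw e)).1 <| le_ciSup (Set.finite_range fun e => (w e)⁻¹ * |J e|).bddAbove e

lemma weightedSupNorm_le (hw : ∀ e, 0 < w e) {c : ℝ} (hc : 0 ≤ c) {J : ι → ℝ}
    (h : ∀ e, |J e| ≤ c * w e) : weightedSupNorm w J ≤ c :=
  Real.iSup_le (fun e => (inv_mul_le_iff₀ (hw e)).2 <| (h e).trans_eq (mul_comm _ _)) hc

end WeightedSupNorm

section WeightedL1Norm

variable {ι : Type*} [Fintype ι] {w : ι → ℝ}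

def weightedL1Norm (w D : ι → ℝ) : ℝ := ∑ e, w e * |D e|

lemma weightedL1Norm_nonneg (hw : ∀ e, 0 < w e) (D : ι → ℝ) : 0 ≤ weightedL1Norm w D :=
  Finset.sum_nonneg fun e _ => mul_nonneg (hw e).le (abs_nonneg _)

lemma weightedL1Norm_smul {r : ℝ} (hr : 0 ≤ r) (D : ι → ℝ) :
    weightedL1Norm w (r • D) = r * weightedL1Norm w D := by
  simp only [weightedL1Norm, Pi.smul_apply, smul_eq_mul, abs_mul, abs_of_nonneg hr,
    Finset.mul_sum]
  exact Finset.sum_congr rfl fun e _ => by ring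

lemma dotProduct_le_weightedL1Norm_mul_weightedSupNorm (hw : ∀ e, 0 < w e) (D J : ι → ℝ) :
    D ⬝ᵥ J ≤ weightedL1Norm w D * weightedSupNorm w J := by
  rw [weightedL1Norm, Finset.sum_mul]
  refine Finset.sum_le_sum fun e _ => ?_
  calc D e * J e ≤ |D e| * |J e| := by rw [← abs_mul]; exact le_abs_self _
    _ ≤ |D e| * (w e * weightedSupNorm w J) :=
      mul_le_mul_of_nonneg_left (abs_le_mul_weightedSupNorm hw J e) (abs_nonneg _)
    _ = w e * |D e| * weightedSupNorm w J := by ring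

lemma dotProduct_mul_sign_eq_weightedL1Norm (D : ι → ℝ) :
    D ⬝ᵥ (fun e => w e * SignType.sign (D e)) = weightedL1Norm w D :=
  Finset.sum_congr rfl fun e _ => by rw [mul_left_comm, ← sign_mul_self, mul_comm (D e)]

end WeightedL1Norm

section MatrixDuality

variable {V ι : Type*} [Fintype V] [Fintype ι] (A : Matrix V ι ℝ) {w : ι → ℝ}

lemma one_le_weightedL1Norm_vecMul_mul_weightedSupNorm (hw : ∀ e, 0 < w e) {u : V → ℝ}
    {φ : V → ℝ} {J : ι → ℝ} (hφ : φ ⬝ᵥ u = 1) (hJ : A *ᵥ J = u) :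
    1 ≤ weightedL1Norm w (φ ᵥ* A) * weightedSupNorm w J :=
  calc 1 = (φ ᵥ* A) ⬝ᵥ J := by rw [← hφ, ← hJ, dotProduct_mulVec]
    _ ≤ _ := dotProduct_le_weightedL1Norm_mul_weightedSupNorm hw _ _

lemma exists_dotProduct_eq_one_mul_weightedL1Norm_vecMul_lt_one (hw : ∀ e, 0 < w e)
    {u : V → ℝ} {c : ℝ} (hc : 0 < c) (h : ∀ J, A *ᵥ J = u → c < weightedSupNorm w J) :
    ∃ φ : V → ℝ, φ ⬝ᵥ u = 1 ∧ c * weightedL1Norm w (φ ᵥ* A) < 1 := by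
  set K : Set (ι → ℝ) := Set.univ.pi fun e => Set.Icc (-(c * w e)) (c * w e)
  have hK : ∀ J, J ∈ K ↔ ∀ e, |J e| ≤ c * w e := by
    simp only [K, Set.mem_univ_pi, Set.mem_Icc, abs_le, implies_true]
  have huK : u ∉ A.mulVecLin '' K := by
    rintro ⟨J, hJK, hJu⟩
    exact (h J hJu).not_ge (weightedSupNorm_le hw hc.le ((hK J).1 hJK))
  obtain ⟨φ, hφ⟩ := exists_dotProduct_lt_of_notMem
    ((convex_pi fun e _ => convex_Icc _ _).linear_image _)
    ((isCompact_univ_pi fun e => isCompact_Icc).image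
      A.mulVecLin.continuous_of_finiteDimensional).isClosed huK
  -- the weighted sign vector of `φ ᵥ* A` maximizes `J ↦ φ ⬝ᵥ A *ᵥ J` on `K`
  set J : ι → ℝ := c • fun e => w e * SignType.sign ((φ ᵥ* A) e)
  have hJK : J ∈ K := (hK J).2 fun e => by
    have hsign : |(SignType.sign ((φ ᵥ* A) e) : ℝ)| ≤ 1 := by
      cases SignType.sign ((φ ᵥ* A) e) <;> simp
    simp only [J, Pi.smul_apply, smul_eq_mul, abs_mul, abs_of_pos hc, abs_of_pos (hw e),
      ← mul_assoc]
    exact mul_le_of_le_one_right (mul_pos hc (hw e)).le hsign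
  have hsep : c * weightedL1Norm w (φ ᵥ* A) < φ ⬝ᵥ u :=
    calc c * weightedL1Norm w (φ ᵥ* A) = φ ⬝ᵥ A *ᵥ J := by
          rw [dotProduct_mulVec, dotProduct_smul, dotProduct_mul_sign_eq_weightedL1Norm,
            smul_eq_mul]
      _ < φ ⬝ᵥ u := hφ _ ⟨J, hJK, rfl⟩
  have hpos : 0 < φ ⬝ᵥ u := (mul_nonneg hc.le (weightedL1Norm_nonneg hw _)).trans_lt hsep
  refine ⟨(φ ⬝ᵥ u)⁻¹ • φ, by rw [smul_dotProduct, smul_eq_mul, inv_mul_cancel₀ hpos.ne'], ?_⟩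
  rwa [smul_vecMul, weightedL1Norm_smul (inv_nonneg.2 hpos.le), mul_left_comm,
    inv_mul_lt_one₀ hpos]

theorem sInf_weightedL1Norm_mul_sInf_weightedSupNorm_eq_one (hw : ∀ e, 0 < w e) {u : V → ℝ}
    (hu : ∃ J, A *ᵥ J = u) (hu₀ : u ≠ 0) :
    sInf {c | ∃ φ : V → ℝ, φ ⬝ᵥ u = 1 ∧ c = weightedL1Norm w (φ ᵥ* A)} *
      sInf {c | ∃ J : ι → ℝ, A *ᵥ J = u ∧ c = weightedSupNorm w J} = 1 := by
  obtain ⟨J₀, hJ₀⟩ := hu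
  refine sInf_mul_sInf_eq_one_of_duality ⟨_, (u ⬝ᵥ u)⁻¹ • u, ?_, rfl⟩ ⟨_, J₀, hJ₀, rfl⟩ ?_ ?_ ?_
  · rw [smul_dotProduct, smul_eq_mul, inv_mul_cancel₀ (dotProduct_self_eq_zero.not.2 hu₀)]
  · rintro _ ⟨J, -, rfl⟩
    exact weightedSupNorm_nonneg hw J
  · rintro _ ⟨φ, hφ, rfl⟩ _ ⟨J, hJ, rfl⟩
    exact one_le_weightedL1Norm_vecMul_mul_weightedSupNorm A hw hφ hJ
  · intro c hc h
    obtain ⟨φ, hφ, hlt⟩ := exists_dotProduct_eq_one_mul_weightedL1Norm_vecMul_lt_one A hw hc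
      fun J hJ => h _ ⟨J, hJ, rfl⟩
    exact ⟨_, ⟨φ, hφ, rfl⟩, hlt⟩

end MatrixDuality

section Incidence

variable {V ι : Type*} [DecidableEq V] (s t : ι → V)

def incidenceMatrix : Matrix V ι ℝ :=
  Matrix.of fun v e => (if s e = v then 1 else 0) - (if t e = v then 1 else 0)

def edgeGraph : SimpleGraph V := SimpleGraph.fromRel fun i j => ∃ e, s e = i ∧ t e = j

lemma vecMul_incidenceMatrix [Fintype V] (φ : V → ℝ) (e : ι) :
    (φ ᵥ* incidenceMatrix s t) e = φ (s e) - φ (t e) := by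
  simp [vecMul, dotProduct, incidenceMatrix, mul_sub]

lemma incidenceMatrix_mulVec_apply [Fintype ι] (J : ι → ℝ) (v : V) :
    (incidenceMatrix s t *ᵥ J) v =
      ∑ e, J e * ((if s e = v then 1 else 0) - (if t e = v then 1 else 0)) := by
  simp [mulVec, dotProduct, incidenceMatrix, mul_comm]

lemma incidenceMatrix_mulVec_single [Fintype ι] [DecidableEq ι] (e : ι) :
    incidenceMatrix s t *ᵥ Pi.single e 1 = Pi.single (s e) 1 - Pi.single (t e) 1 := by
  ext v
  simp [incidenceMatrix, Pi.single_apply, eq_comm]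

lemma single_sub_single_mem_range_incidenceMatrix [Fintype ι] {i j : V}
    (h : (edgeGraph s t).Reachable i j) :
    Pi.single i 1 - Pi.single j 1 ∈ LinearMap.range (incidenceMatrix s t).mulVecLin := by
  classical
  obtain ⟨p⟩ := h
  induction p with
  | nil => simp
  | @cons a b c hab p ih =>
    rw [← sub_add_sub_cancel _ (Pi.single b (1 : ℝ))]
    refine Submodule.add_mem _ ?_ ih
    obtain ⟨-, ⟨e, rfl, rfl⟩ | ⟨e, rfl, rfl⟩⟩ := SimpleGraph.fromRel_adj _ _ _ |>.1 hab
    · exact ⟨Pi.single e 1, incidenceMatrix_mulVec_single s t e⟩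
    · exact ⟨-Pi.single e 1, by
        rw [mulVecLin_apply, mulVec_neg, incidenceMatrix_mulVec_single, neg_sub]⟩

lemma mem_range_incidenceMatrix_of_sum_eq_zero [Fintype V] [Fintype ι]
    (hconn : (edgeGraph s t).Connected) {u : V → ℝ} (hu : ∑ v, u v = 0) :
    u ∈ LinearMap.range (incidenceMatrix s t).mulVecLin := by
  obtain ⟨v₀⟩ := hconn.nonempty
  have hu_eq : u = ∑ v, u v • (Pi.single v 1 - Pi.single v₀ 1) := by
    simpa [smul_sub, Finset.sum_sub_distrib, ← Finset.sum_smul, hu] using pi_eq_sum_univ' u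
  rw [hu_eq]
  exact Submodule.sum_mem _ fun v _ => Submodule.smul_mem _ _
    (single_sub_single_mem_range_incidenceMatrix s t (hconn.preconnected v v₀))

end Incidence

theorem one_conductance_beckmann_gauge_duality_general
    (n N : ℕ) (s t : Fin N → Fin n) (w : Fin N → ℝ)
    (hw : ∀ e, 0 < w e)
    (hconn : (SimpleGraph.fromRel fun i j => ∃ e, s e = i ∧ t e = j).Connected)
    (μ ν : Fin n → ℝ)
    (hμ : (∀ i, 0 ≤ μ i) ∧ ∑ i, μ i = 1)
    (hν : (∀ i, 0 ≤ ν i) ∧ ∑ i, ν i = 1)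
    (hμν : μ ≠ ν) :
    sInf {c : ℝ | ∃ φ : Fin n → ℝ, φ ⬝ᵥ (μ - ν) = 1 ∧
        c = ∑ e, w e * |φ (s e) - φ (t e)|} *
    sInf {c : ℝ | ∃ J : Fin N → ℝ,
        (∀ v, (∑ e, J e * ((if s e = v then (1:ℝ) else 0) - (if t e = v then (1:ℝ) else 0)))
          = μ v - ν v) ∧
        c = ⨆ e, (w e)⁻¹ * |J e|} = 1 := by
  have hfeas : ∃ J, incidenceMatrix s t *ᵥ J = μ - ν :=
    mem_range_incidenceMatrix_of_sum_eq_zero s t hconn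
      (by simp [Finset.sum_sub_distrib, hμ.2, hν.2])
  simpa only [weightedL1Norm, weightedSupNorm, vecMul_incidenceMatrix, funext_iff,
    incidenceMatrix_mulVec_apply, Pi.sub_apply] using
    sInf_weightedL1Norm_mul_sInf_weightedSupNorm_eq_one (incidenceMatrix s t) hw hfeas
      (sub_ne_zero.2 hμν)

/-- **gauge duality, `p = 1`.**
For a finite connected weighted undirected graph (vertices `Fin n`, edges indexed by
`Fin N` with endpoints `s e ≠ t e`, positive weights `w e`, and node-edge oriented
incidence matrix `B` whose column at edge `e` is `e_{s e} - e_{t e}`) and probability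
measures `μ ≠ ν`: `C₁(μ,ν) · B_{w⁻¹,∞}(μ,ν) = 1`, i.e.
`inf { Σ_e w_e |φ_{s e} - φ_{t e}| : φᵀ(μ-ν) = 1 }`
times
`inf { max_e w_e⁻¹ |J_e| : BJ = μ - ν }` equals `1`. -/
theorem one_conductance_beckmann_gauge_duality
    (n N : ℕ) (s t : Fin N → Fin n) (w : Fin N → ℝ)
    (hw : ∀ e, 0 < w e) (hst : ∀ e, s e ≠ t e)
    (hconn : (SimpleGraph.fromRel fun i j => ∃ e, s e = i ∧ t e = j).Connected)
    (μ ν : Fin n → ℝ)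
    (hμ : (∀ i, 0 ≤ μ i) ∧ ∑ i, μ i = 1)
    (hν : (∀ i, 0 ≤ ν i) ∧ ∑ i, ν i = 1)
    (hμν : μ ≠ ν) :
    sInf {c : ℝ | ∃ φ : Fin n → ℝ, φ ⬝ᵥ (μ - ν) = 1 ∧
        c = ∑ e, w e * |φ (s e) - φ (t e)|} *
    sInf {c : ℝ | ∃ J : Fin N → ℝ,
        (∀ v, (∑ e, J e * ((if s e = v then (1:ℝ) else 0) - (if t e = v then (1:ℝ) else 0)))
          = μ v - ν v) ∧
        c = ⨆ e, (w e)⁻¹ * |J e|} = 1 :=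
  one_conductance_beckmann_gauge_duality_general n N s t w hw hconn μ ν hμ hν hμν
end

section
/- Let G be a finite connected weighted undirected graph and let μ, ν ∈ P(V) with μ ≠ ν. Then C_∞(μ,ν) = 1 / B_{w^{−1},1}(μ,ν); that is, ( inf { max_{{i,j}∈E} w_{ij}|φ_i − φ_j| : φ ∈ ℝ^n, φᵀ(μ−ν) = 1 } ) · ( inf { Σ_{e∈E} w_e^{−1} |J_e| : J ∈ ℝ^E, BJ = μ − ν } ) = 1. -/
/-!
Write `B` for the oriented incidence matrix, `b = μ - ν`, `‖J‖ = Σ_e w_e⁻¹ |J_e|` and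
`L(φ) = max_e w_e |φ (s e) - φ (t e)|`. Since `φ ⬝ B J = (φ B) ⬝ J`, every feasible pair satisfies
`1 = φ ⬝ b ≤ L(φ) ‖J‖`, so the product of the infima is at least `1`. Conversely, if `r` is below
the Beckmann cost then `b` lies outside the compact convex set `B {‖J‖ ≤ r}`; a separating
functional `φ` satisfies `r L(φ) = sup_{‖J‖ ≤ r} φ ⬝ B J < φ ⬝ b`, and rescaling `φ` gives
`r C_∞ < 1`. Connectivity, together with `Σ_v b v = 0`, makes `b` the divergence of some flow,
so neither infimum is over an empty set.
-/

open Matrix Finset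

theorem sInf_mul_sInf_eq_one {S T : Set ℝ} (hS : S.Nonempty) (hT : T.Nonempty)
    (hT₀ : ∀ b ∈ T, 0 ≤ b) (hST : ∀ a ∈ S, ∀ b ∈ T, 1 ≤ a * b)
    (hgap : ∀ r, 0 < r → r < sInf T → ∃ a ∈ S, r * a < 1) :
    sInf S * sInf T = 1 := by
  obtain ⟨a₀, ha₀⟩ := hS
  obtain ⟨b₀, hb₀⟩ := hT
  have hpos : ∀ a ∈ S, ∀ b ∈ T, 0 < a ∧ 0 < b := fun a ha b hb =>
    (pos_and_pos_or_neg_and_neg_of_mul_pos (zero_lt_one.trans_le (hST a ha b hb))).resolve_right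
      fun hneg => (hT₀ b hb).not_gt hneg.2
  have hinv_le : ∀ a ∈ S, a⁻¹ ≤ sInf T := fun a ha =>
    le_csInf ⟨b₀, hb₀⟩ fun b hb => (inv_le_iff_one_le_mul₀' (hpos a ha b hb).1).mpr (hST a ha b hb)
  have hT_pos : 0 < sInf T := (inv_pos.mpr (hpos a₀ ha₀ b₀ hb₀).1).trans_le (hinv_le a₀ ha₀)
  have hS_ge : (sInf T)⁻¹ ≤ sInf S :=
    le_csInf ⟨a₀, ha₀⟩ fun a ha => inv_le_of_inv_le₀ (hpos a ha b₀ hb₀).1 (hinv_le a ha)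
  have hS_pos : 0 < sInf S := (inv_pos.mpr hT_pos).trans_le hS_ge
  refine le_antisymm (not_lt.mp fun hlt => ?_) ((inv_le_iff_one_le_mul₀ hT_pos).mp hS_ge)
  obtain ⟨r, hr₁, hr₂⟩ := _root_.exists_between ((inv_lt_iff_one_lt_mul₀' hS_pos).mpr hlt)
  have hr : 0 < r := (inv_pos.mpr hS_pos).trans hr₁
  obtain ⟨a, ha, hra⟩ := hgap r hr hr₂
  have hSa : sInf S ≤ a := csInf_le ⟨0, fun a ha => (hpos a ha b₀ hb₀).1.le⟩ ha
  have hSr : 1 < sInf S * r := (inv_lt_iff_one_lt_mul₀' hS_pos).mp hr₁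
  nlinarith

theorem exists_dotProduct_eq_one {V 𝕜 : Type*} [Fintype V] [Field 𝕜] [LinearOrder 𝕜]
    [IsStrictOrderedRing 𝕜] {b : V → 𝕜} (hb : b ≠ 0) : ∃ φ : V → 𝕜, φ ⬝ᵥ b = 1 :=
  ⟨(b ⬝ᵥ b)⁻¹ • b, by
    rw [smul_dotProduct, smul_eq_mul, inv_mul_cancel₀ (dotProduct_self_eq_zero.not.mpr hb)]⟩

section Incidence

variable {V E : Type*} [DecidableEq V]

def orientedIncMatrix (R : Type*) [Ring R] (s t : E → V) : Matrix V E R :=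
  Matrix.of fun v e => (if s e = v then 1 else 0) - (if t e = v then 1 else 0)

def incidenceGraph (s t : E → V) : SimpleGraph V :=
  SimpleGraph.fromRel fun i j => ∃ e, s e = i ∧ t e = j

variable {R : Type*} (s t : E → V)

theorem col_orientedIncMatrix [Ring R] (e : E) :
    (orientedIncMatrix R s t).col e = Pi.single (s e) 1 - Pi.single (t e) 1 := by
  ext v
  simp [orientedIncMatrix, Pi.single_apply, eq_comm]

theorem vecMul_orientedIncMatrix [Fintype V] [Ring R] (φ : V → R) (e : E) :
    (φ ᵥ* orientedIncMatrix R s t) e = φ (s e) - φ (t e) := by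
  change φ ⬝ᵥ (orientedIncMatrix R s t).col e = _
  rw [col_orientedIncMatrix, dotProduct_sub, dotProduct_single,
    dotProduct_single, mul_one, mul_one]

theorem mulVec_orientedIncMatrix_apply [Fintype E] [CommRing R] (J : E → R) (v : V) :
    (orientedIncMatrix R s t *ᵥ J) v =
      ∑ e, J e * ((if s e = v then 1 else 0) - (if t e = v then 1 else 0)) := by
  simp only [mulVec, dotProduct, orientedIncMatrix, of_apply, mul_comm]

variable {s t}

theorem single_sub_single_mem_span_col [Ring R] (hG : (incidenceGraph s t).Preconnected)
    (i j : V) :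
    Pi.single i 1 - Pi.single j 1 ∈ Submodule.span R (Set.range (orientedIncMatrix R s t).col) := by
  obtain ⟨p⟩ := hG i j
  induction p with
  | nil => simp
  | @cons a b c hab _ ih =>
    rw [← sub_add_sub_cancel _ (Pi.single b 1)]
    refine Submodule.add_mem _ ?_ ih
    obtain ⟨-, ⟨e, rfl, rfl⟩ | ⟨e, rfl, rfl⟩⟩ := hab
    · exact Submodule.subset_span ⟨e, col_orientedIncMatrix s t e⟩
    · rw [← neg_sub]
      exact Submodule.neg_mem _ (Submodule.subset_span ⟨e, col_orientedIncMatrix s t e⟩)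

theorem exists_mulVec_orientedIncMatrix_eq [Fintype V] [Fintype E] [CommRing R]
    (hG : (incidenceGraph s t).Preconnected)
    {x : V → R} (hx : ∑ v, x v = 0) : ∃ J, orientedIncMatrix R s t *ᵥ J = x := by
  suffices x ∈ LinearMap.range (orientedIncMatrix R s t).mulVecLin from this
  rw [range_mulVecLin]
  cases isEmpty_or_nonempty V with
  | inl _ => simp [Subsingleton.elim x 0]
  | inr h =>
    obtain ⟨i₀⟩ := h
    have hdecomp : x = ∑ v, x v • (Pi.single v 1 - Pi.single i₀ 1) := by
      simpa [smul_sub, sum_sub_distrib, ← sum_smul, hx] using pi_eq_sum_univ' x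
    rw [hdecomp]
    exact Submodule.sum_mem _ fun v _ =>
      Submodule.smul_mem _ _ (single_sub_single_mem_span_col hG v i₀)

end Incidence

section Duality

variable {V E : Type*} [Fintype E] {w : E → ℝ}

noncomputable def flowCost (w J : E → ℝ) : ℝ := ∑ e, (w e)⁻¹ * |J e|

noncomputable def weightedLip (s t : E → V) (w : E → ℝ) (φ : V → ℝ) : ℝ :=
  ⨆ e, w e * |φ (s e) - φ (t e)|

theorem flowCost_nonneg (hw : ∀ e, 0 ≤ w e) (J : E → ℝ) : 0 ≤ flowCost w J :=
  sum_nonneg fun e _ => mul_nonneg (inv_nonneg.mpr (hw e)) (abs_nonneg _)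

theorem flowCost_single [DecidableEq E] (e : E) (c : ℝ) :
    flowCost w (Pi.single e c) = (w e)⁻¹ * |c| := by
  rw [flowCost, sum_eq_single e (fun e' _ he' => by simp [he']) (by simp), Pi.single_eq_same]

theorem inv_mul_abs_le_flowCost (hw : ∀ e, 0 ≤ w e) (J : E → ℝ) (e : E) :
    (w e)⁻¹ * |J e| ≤ flowCost w J :=
  single_le_sum (f := fun e => (w e)⁻¹ * |J e|)
    (fun e _ => mul_nonneg (inv_nonneg.mpr (hw e)) (abs_nonneg _)) (mem_univ e)

theorem convexOn_flowCost (hw : ∀ e, 0 ≤ w e) : ConvexOn ℝ Set.univ (flowCost w) := by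
  refine ⟨convex_univ, fun J _ K _ a b ha hb _ => ?_⟩
  simp only [flowCost, smul_eq_mul, mul_sum, ← sum_add_distrib, Pi.add_apply, Pi.smul_apply]
  refine sum_le_sum fun e _ => ?_
  calc (w e)⁻¹ * |a * J e + b * K e| ≤ (w e)⁻¹ * (a * |J e| + b * |K e|) := by
        gcongr
        · exact inv_nonneg.mpr (hw e)
        · calc |a * J e + b * K e| ≤ |a * J e| + |b * K e| := abs_add_le _ _
            _ = a * |J e| + b * |K e| := by
              rw [abs_mul, abs_mul, abs_of_nonneg ha, abs_of_nonneg hb]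
    _ = a * ((w e)⁻¹ * |J e|) + b * ((w e)⁻¹ * |K e|) := by ring

theorem isCompact_flowCost_le (hw : ∀ e, 0 < w e) (r : ℝ) :
    IsCompact {J : E → ℝ | flowCost w J ≤ r} := by
  have hclosed : IsClosed {J : E → ℝ | flowCost w J ≤ r} :=
    isClosed_le (continuous_finsetSum _ fun e _ => continuous_const.mul (continuous_apply e).abs)
      continuous_const
  have hbox : IsCompact (Set.univ.pi fun e => Set.Icc (-(w e * r)) (w e * r)) :=
    isCompact_univ_pi fun e => isCompact_Icc
  refine hbox.of_isClosed_subset hclosed fun J hJ e _ => ?_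
  have hle : (w e)⁻¹ * |J e| ≤ r := (inv_mul_abs_le_flowCost (fun e => (hw e).le) J e).trans hJ
  exact abs_le.mp ((inv_mul_le_iff₀ (hw e)).mp hle)

variable {s t : E → V}

theorem le_weightedLip (φ : V → ℝ) (e : E) :
    w e * |φ (s e) - φ (t e)| ≤ weightedLip s t w φ :=
  le_ciSup (f := fun e => w e * |φ (s e) - φ (t e)|) (Set.finite_range _).bddAbove e

variable [Fintype V] [DecidableEq V]

theorem dotProduct_mulVec_orientedIncMatrix_le (hw : ∀ e, 0 < w e) (φ : V → ℝ) (J : E → ℝ) :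
    φ ⬝ᵥ (orientedIncMatrix ℝ s t *ᵥ J) ≤ weightedLip s t w φ * flowCost w J := by
  rw [dotProduct_mulVec, dotProduct, flowCost, mul_sum]
  refine sum_le_sum fun e _ => ?_
  rw [vecMul_orientedIncMatrix]
  calc (φ (s e) - φ (t e)) * J e ≤ (w e * |φ (s e) - φ (t e)|) * ((w e)⁻¹ * |J e|) := by
        rw [mul_mul_mul_comm, mul_inv_cancel₀ (hw e).ne', one_mul, ← abs_mul]
        exact le_abs_self _
    _ ≤ weightedLip s t w φ * ((w e)⁻¹ * |J e|) := by
        gcongr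
        · exact mul_nonneg (inv_nonneg.mpr (hw e).le) (abs_nonneg _)
        · exact le_weightedLip φ e

theorem mul_weightedLip_le [DecidableEq E] (hw : ∀ e, 0 < w e) {r u : ℝ} (hr : 0 ≤ r)
    {φ : V → ℝ} (h : ∀ J, flowCost w J ≤ r → φ ⬝ᵥ (orientedIncMatrix ℝ s t *ᵥ J) ≤ u) :
    r * weightedLip s t w φ ≤ u := by
  have hu : 0 ≤ u := by simpa [flowCost] using h 0 (by simpa [flowCost] using hr)
  rw [weightedLip, Real.mul_iSup_of_nonneg hr]
  refine Real.iSup_le (fun e => ?_) hu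
  -- the supremum of `φ ⬝ B J` over `flowCost w J ≤ r` is attained at the flows `±r w e` on `e`
  have hsingle : ∀ c, |c| = r * w e → (φ (s e) - φ (t e)) * c ≤ u := fun c hc => by
    have hJ := h (Pi.single e c) (by
      rw [flowCost_single, hc, mul_comm r, inv_mul_cancel_left₀ (hw e).ne'])
    rwa [dotProduct_mulVec, dotProduct_single, vecMul_orientedIncMatrix] at hJ
  have hrw : |r * w e| = r * w e := abs_of_nonneg (mul_nonneg hr (hw e).le)
  calc r * (w e * |φ (s e) - φ (t e)|) = |(φ (s e) - φ (t e)) * (r * w e)| := by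
        rw [abs_mul, hrw]; ring
    _ ≤ u := abs_le.mpr ⟨by linarith [hsingle (-(r * w e)) (by rw [abs_neg, hrw])],
        hsingle _ hrw⟩

theorem exists_dotProduct_eq_one_mul_weightedLip_lt [DecidableEq E] (hw : ∀ e, 0 < w e)
    {r : ℝ} (hr : 0 < r) {b : V → ℝ}
    (hb : ∀ J, orientedIncMatrix ℝ s t *ᵥ J = b → r < flowCost w J) :
    ∃ φ : V → ℝ, φ ⬝ᵥ b = 1 ∧ r * weightedLip s t w φ < 1 := by
  set B := (orientedIncMatrix ℝ s t).mulVecLin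
  set K := {J : E → ℝ | flowCost w J ≤ r}
  have hb_notMem : b ∉ B '' K := by
    rintro ⟨J, hJK, hJ⟩
    exact (hb J hJ).not_ge hJK
  have hK : Convex ℝ K := by simpa using (convexOn_flowCost fun e => (hw e).le).convex_le r
  obtain ⟨f, u, hfK, hfb⟩ := geometric_hahn_banach_closed_point (hK.linear_image B)
    ((isCompact_flowCost_le hw r).image B.continuous_of_finiteDimensional).isClosed hb_notMem
  set φ := (dotProductEquiv ℝ V).symm f.toLinearMap
  have hf : ∀ x, f x = φ ⬝ᵥ x := fun x => by
    simp [φ, ← dotProductEquiv_apply_apply, LinearEquiv.apply_symm_apply]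
  have hu : 0 < u := by
    simpa using hfK 0 ⟨0, by simpa [K, flowCost] using hr.le, map_zero B⟩
  have hud : u < φ ⬝ᵥ b := hf b ▸ hfb
  have hd : 0 < φ ⬝ᵥ b := hu.trans hud
  refine ⟨(φ ⬝ᵥ b)⁻¹ • φ, by rw [smul_dotProduct, smul_eq_mul, inv_mul_cancel₀ hd.ne'], ?_⟩
  calc r * weightedLip s t w ((φ ⬝ᵥ b)⁻¹ • φ) ≤ (φ ⬝ᵥ b)⁻¹ * u :=
      mul_weightedLip_le hw hr.le fun J hJ => by
        rw [smul_dotProduct, smul_eq_mul, ← hf (orientedIncMatrix ℝ s t *ᵥ J)]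
        exact mul_le_mul_of_nonneg_left (hfK _ ⟨J, hJ, rfl⟩).le (inv_nonneg.mpr hd.le)
    _ < 1 := by rwa [inv_mul_lt_one₀ hd]

end Duality

theorem infty_conductance_beckmann_gauge_duality_general
    (n N : ℕ) (s t : Fin N → Fin n) (w : Fin N → ℝ)
    (hw : ∀ e, 0 < w e)
    (hconn : (SimpleGraph.fromRel fun i j => ∃ e, s e = i ∧ t e = j).Connected)
    (μ ν : Fin n → ℝ)
    (hμ : (∀ i, 0 ≤ μ i) ∧ ∑ i, μ i = 1)
    (hν : (∀ i, 0 ≤ ν i) ∧ ∑ i, ν i = 1)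
    (hμν : μ ≠ ν) :
    sInf {c : ℝ | ∃ φ : Fin n → ℝ, φ ⬝ᵥ (μ - ν) = 1 ∧
        c = ⨆ e, w e * |φ (s e) - φ (t e)|} *
    sInf {c : ℝ | ∃ J : Fin N → ℝ,
        (∀ v, (∑ e, J e * ((if s e = v then (1:ℝ) else 0) - (if t e = v then (1:ℝ) else 0)))
          = μ v - ν v) ∧
        c = ∑ e, (w e)⁻¹ * |J e|} = 1 := by
  have hflow : {c : ℝ | ∃ J : Fin N → ℝ,
      (∀ v, (∑ e, J e * ((if s e = v then (1:ℝ) else 0) - (if t e = v then (1:ℝ) else 0)))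
        = μ v - ν v) ∧ c = ∑ e, (w e)⁻¹ * |J e|} =
      {c | ∃ J, orientedIncMatrix ℝ s t *ᵥ J = μ - ν ∧ c = flowCost w J} := by
    simp only [funext_iff, mulVec_orientedIncMatrix_apply, Pi.sub_apply, flowCost]
  rw [hflow]
  obtain ⟨φ, hφ⟩ := exists_dotProduct_eq_one (sub_ne_zero.mpr hμν)
  obtain ⟨J, hJ⟩ := exists_mulVec_orientedIncMatrix_eq (s := s) (t := t) hconn.preconnected
    (x := μ - ν) (by simp [sum_sub_distrib, hμ.2, hν.2])
  have hw₀ : ∀ e, 0 ≤ w e := fun e => (hw e).le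
  refine sInf_mul_sInf_eq_one ⟨_, φ, hφ, rfl⟩ ⟨_, J, hJ, rfl⟩
    (fun _ ⟨J, _, hc⟩ => hc ▸ flowCost_nonneg hw₀ J) ?_ fun r hr hrT => ?_
  · rintro _ ⟨φ, hφ, rfl⟩ _ ⟨J, hJ, rfl⟩
    have h := dotProduct_mulVec_orientedIncMatrix_le (s := s) (t := t) hw φ J
    rwa [hJ, hφ] at h
  · obtain ⟨φ, hφ, hlt⟩ := exists_dotProduct_eq_one_mul_weightedLip_lt hw hr fun J hJ =>
      hrT.trans_le (csInf_le ⟨0, fun _ ⟨J, _, hc⟩ => hc ▸ flowCost_nonneg hw₀ J⟩ ⟨J, hJ, rfl⟩)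
    exact ⟨_, ⟨φ, hφ, rfl⟩, hlt⟩

/-- **gauge duality, `p = ∞`; relation to 1-Wasserstein.**
For a finite connected weighted undirected graph (vertices `Fin n`, edges indexed by
`Fin N` with endpoints `s e ≠ t e`, positive weights `w e`, and node-edge oriented
incidence matrix `B` whose column at edge `e` is `e_{s e} - e_{t e}`) and probability
measures `μ ≠ ν`: `C_∞(μ,ν) · B_{w⁻¹,1}(μ,ν) = 1`, i.e.
`inf { max_e w_e |φ_{s e} - φ_{t e}| : φᵀ(μ-ν) = 1 }`
times
`inf { Σ_e w_e⁻¹ |J_e| : BJ = μ - ν }` equals `1`. -/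
theorem infty_conductance_beckmann_gauge_duality
    (n N : ℕ) (s t : Fin N → Fin n) (w : Fin N → ℝ)
    (hw : ∀ e, 0 < w e) (hst : ∀ e, s e ≠ t e)
    (hconn : (SimpleGraph.fromRel fun i j => ∃ e, s e = i ∧ t e = j).Connected)
    (μ ν : Fin n → ℝ)
    (hμ : (∀ i, 0 ≤ μ i) ∧ ∑ i, μ i = 1)
    (hν : (∀ i, 0 ≤ ν i) ∧ ∑ i, ν i = 1)
    (hμν : μ ≠ ν) :
    sInf {c : ℝ | ∃ φ : Fin n → ℝ, φ ⬝ᵥ (μ - ν) = 1 ∧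
        c = ⨆ e, w e * |φ (s e) - φ (t e)|} *
    sInf {c : ℝ | ∃ J : Fin N → ℝ,
        (∀ v, (∑ e, J e * ((if s e = v then (1:ℝ) else 0) - (if t e = v then (1:ℝ) else 0)))
          = μ v - ν v) ∧
        c = ∑ e, (w e)⁻¹ * |J e|} = 1 :=
  infty_conductance_beckmann_gauge_duality_general n N s t w hw hconn μ ν hμ hν hμν
end

section
/- Let L be the Laplacian of a finite connected weighted undirected graph on n ≥ 2 vertices with smallest positive eigenvalue λ > 0. Let μ, ν ∈ P(V), let η ∈ ℝ^n with 1ᵀη = 0, and for t ≥ 0 set ψ = L†(μ−ν) and ψ̃_t = L† e^{−tL} (μ − ν + η). Then ‖ψ − ψ̃_t‖₂ ≤ t ‖μ−ν‖₂ + λ^{−1} e^{−tλ} ‖η‖₂. -/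
/-!
Both potentials are spectral functions of the symmetric matrix `L`: by uniqueness of the
Moore–Penrose inverse, `L† = φ(L)` for `φ x = x⁻¹` (with `0⁻¹ = 0`), and `e^{-tL}` is `x ↦ e^{-tx}`
applied to `L`. Hence `ψ - ψ̃_t = g(L)(μ - ν) - h(L)η` with `g x = x⁻¹(1 - e^{-tx})` and
`h x = x⁻¹e^{-tx}`, and the operator norm of `f(L)` is the maximum of `|f|` on the spectrum.
Since `L` is positive semidefinite, its spectrum lies in `{0} ∪ [λ, ∞)`, where `|g| ≤ t`
(from `1 - e^{-s} ≤ s`) and `|h| ≤ λ⁻¹e^{-tλ}`.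
-/

open Matrix

namespace Matrix

section MoorePenrose

variable {m n R : Type*} [Fintype m] [Fintype n] [CommRing R]

def IsMoorePenroseInverse (A : Matrix m n R) (X : Matrix n m R) : Prop :=
  A * X * A = A ∧ X * A * X = X ∧ (A * X)ᵀ = A * X ∧ (X * A)ᵀ = X * A

theorem IsMoorePenroseInverse.unique {A : Matrix m n R} {X Y : Matrix n m R}
    (hX : A.IsMoorePenroseInverse X) (hY : A.IsMoorePenroseInverse Y) : X = Y := by
  obtain ⟨hX₁, hX₂, hX₃, hX₄⟩ := hX
  obtain ⟨hY₁, hY₂, hY₃, hY₄⟩ := hY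
  have hAX : A * X = A * Y := by
    calc A * X = ((A * Y) * (A * X))ᵀ := by rw [← Matrix.mul_assoc, hY₁, hX₃]
      _ = A * X * A * Y := by rw [transpose_mul, hX₃, hY₃, Matrix.mul_assoc (A * X)]
      _ = A * Y := by rw [hX₁]
  have hXA : X * A = Y * A := by
    calc X * A = ((X * A) * (Y * A))ᵀ := by
          rw [show X * A * (Y * A) = X * (A * Y * A) by simp only [Matrix.mul_assoc], hY₁, hX₄]
      _ = Y * (A * X * A) := by rw [transpose_mul, hX₄, hY₄]; simp only [Matrix.mul_assoc]
      _ = Y * A := by rw [hX₁]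
  calc X = X * A * X := hX₂.symm
    _ = Y * (A * Y) := by rw [hXA, Matrix.mul_assoc, hAX]
    _ = Y := by rw [← Matrix.mul_assoc, hY₂]

end MoorePenrose

variable {n : Type*} [Fintype n] [DecidableEq n]

section Laplacian

theorem two_mul_dotProduct_laplacian_mulVec {W : Matrix n n ℝ} (hW : W.IsSymm) (x : n → ℝ) :
    2 * (x ⬝ᵥ (diagonal (fun i ↦ ∑ j, W i j) - W) *ᵥ x) = ∑ i, ∑ j, W i j * (x i - x j) ^ 2 := by
  have hquad : x ⬝ᵥ (diagonal (fun i ↦ ∑ j, W i j) - W) *ᵥ x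
      = ∑ i, ∑ j, W i j * (x i ^ 2 - x i * x j) := by
    rw [sub_mulVec, dotProduct_sub]
    simp only [dotProduct, mulVec_diagonal]
    simp only [mulVec, dotProduct, Finset.sum_mul, Finset.mul_sum, ← Finset.sum_sub_distrib]
    exact Finset.sum_congr rfl fun i _ ↦ Finset.sum_congr rfl fun j _ ↦ by ring
  have hswap : ∑ i, ∑ j, W i j * (x i ^ 2 - x i * x j)
      = ∑ i, ∑ j, W i j * (x j ^ 2 - x j * x i) := by
    rw [Finset.sum_comm]
    simp only [hW.apply]
  rw [hquad, two_mul]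
  nth_rw 2 [hswap]
  simp only [← Finset.sum_add_distrib]
  exact Finset.sum_congr rfl fun i _ ↦ Finset.sum_congr rfl fun j _ ↦ by ring

theorem posSemidef_laplacian {W : Matrix n n ℝ} (hW : W.IsSymm) (hW₀ : ∀ i j, 0 ≤ W i j) :
    (diagonal (fun i ↦ ∑ j, W i j) - W).PosSemidef := by
  refine .of_dotProduct_mulVec_nonneg
    (isHermitian_iff_isSymm.mpr ((isSymm_diagonal _).sub hW)) fun x ↦ ?_
  have hsum : 0 ≤ ∑ i, ∑ j, W i j * (x i - x j) ^ 2 :=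
    Finset.sum_nonneg fun i _ ↦ Finset.sum_nonneg fun j _ ↦ mul_nonneg (hW₀ i j) (sq_nonneg _)
  rw [star_trivial]
  linarith [two_mul_dotProduct_laplacian_mulVec hW x]

end Laplacian

section Spectrum

theorem exists_mulVec_eq_smul_of_mem_spectrum {K : Type*} [Field K] {A : Matrix n n K} {x : K}
    (hx : x ∈ spectrum K A) : ∃ v ≠ 0, A *ᵥ v = x • v := by
  rw [← spectrum_toLin', ← Module.End.hasEigenvalue_iff_mem_spectrum] at hx
  obtain ⟨v, hv⟩ := hx.exists_hasEigenvector
  exact ⟨v, hv.2, by simpa using hv.apply_eq_smul⟩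

theorem PosSemidef.nonneg_of_mem_spectrum {A : Matrix n n ℝ} (hA : A.PosSemidef) {x : ℝ}
    (hx : x ∈ spectrum ℝ A) : 0 ≤ x := by
  obtain ⟨i, rfl⟩ := hA.1.spectrum_real_eq_range_eigenvalues ▸ hx
  exact hA.eigenvalues_nonneg i

theorem PosSemidef.eq_zero_or_le_of_mem_spectrum {A : Matrix n n ℝ} (hA : A.PosSemidef) {lam : ℝ}
    (hlam : lam ∈ lowerBounds {c : ℝ | 0 < c ∧ ∃ v : n → ℝ, v ≠ 0 ∧ A *ᵥ v = c • v}) {x : ℝ}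
    (hx : x ∈ spectrum ℝ A) : x = 0 ∨ lam ≤ x := by
  refine (hA.nonneg_of_mem_spectrum hx).eq_or_lt.imp Eq.symm fun hx₀ ↦ hlam ⟨hx₀, ?_⟩
  exact exists_mulVec_eq_smul_of_mem_spectrum hx

end Spectrum

section FunctionalCalculus

theorem cfc_mul_cfc (A : Matrix n n ℝ) (f g : ℝ → ℝ) :
    cfc f A * cfc g A = cfc (fun x ↦ f x * g x) A :=
  (cfc_mul f g A (A.finite_spectrum.continuousOn f) (A.finite_spectrum.continuousOn g)).symm

theorem transpose_cfc (A : Matrix n n ℝ) (f : ℝ → ℝ) : (cfc f A)ᵀ = cfc f A :=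
  (isHermitian_iff_isSymm.mp (cfc_predicate f A)).eq

theorem isMoorePenroseInverse_cfc (A : Matrix n n ℝ) {f g : ℝ → ℝ}
    (hfgf : ∀ x, f x * g x * f x = f x) (hgfg : ∀ x, g x * f x * g x = g x) :
    (cfc f A).IsMoorePenroseInverse (cfc g A) :=
  ⟨by simp only [cfc_mul_cfc, hfgf], by simp only [cfc_mul_cfc, hgfg],
    by rw [cfc_mul_cfc, transpose_cfc], by rw [cfc_mul_cfc, transpose_cfc]⟩

theorem isMoorePenroseInverse_cfc_inv {A : Matrix n n ℝ} (hA : IsSelfAdjoint A) :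
    A.IsMoorePenroseInverse (cfc (fun x : ℝ ↦ x⁻¹) A) := by
  have h := isMoorePenroseInverse_cfc A (f := fun x ↦ x) (g := fun x ↦ x⁻¹) mul_inv_mul_cancel
    fun x ↦ by simpa using mul_inv_mul_cancel x⁻¹
  rwa [cfc_id' ℝ A hA] at h

theorem exp_neg_smul_eq_cfc {A : Matrix n n ℝ} (hA : IsSelfAdjoint A) (t : ℝ) :
    NormedSpace.exp (-(t • A)) = cfc (fun x ↦ Real.exp (-(t * x))) A := by
  -- `NormedSpace.exp` depends only on the topology, so any C⋆-norm on matrices may be used here.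
  have hexp : cfc Real.exp (-(t • A)) = NormedSpace.exp (-(t • A)) := by
    open scoped Matrix.Norms.L2Operator in exact CFC.real_exp_eq_normedSpace_exp
  rw [← hexp, cfc_comp' Real.exp (fun x ↦ -(t * x)) A, cfc_neg (t * ·), cfc_const_mul_id t A hA]

open scoped Matrix.Norms.L2Operator in
theorem norm_toLp_cfc_mulVec_le (A : Matrix n n ℝ) {f : ℝ → ℝ} {c : ℝ} (hc : 0 ≤ c)
    (hf : ∀ x ∈ spectrum ℝ A, |f x| ≤ c) (v : n → ℝ) :
    ‖WithLp.toLp 2 (cfc f A *ᵥ v)‖ ≤ c * ‖WithLp.toLp 2 v‖ :=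
  ((cfc f A).l2_opNorm_mulVec (WithLp.toLp 2 v)).trans
    (mul_le_mul_of_nonneg_right (norm_cfc_le hc hf) (norm_nonneg _))

end FunctionalCalculus

end Matrix

theorem EuclideanSpace.norm_toLp_real {n : Type*} [Fintype n] (v : n → ℝ) :
    ‖WithLp.toLp 2 v‖ = √(∑ i, v i ^ 2) := by
  simp [EuclideanSpace.norm_eq]

theorem abs_inv_mul_one_sub_exp_neg_le {t x : ℝ} (ht : 0 ≤ t) (hx : 0 ≤ x) :
    |x⁻¹ * (1 - Real.exp (-(t * x)))| ≤ t := by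
  rcases hx.eq_or_lt with rfl | hx
  · simpa using ht
  have h₁ : 0 ≤ 1 - Real.exp (-(t * x)) := by
    simpa using Real.exp_le_one_iff.mpr (neg_nonpos.mpr (mul_nonneg ht hx.le))
  have h₂ : 1 - Real.exp (-(t * x)) ≤ t * x := by linarith [Real.add_one_le_exp (-(t * x))]
  rw [abs_of_nonneg (mul_nonneg (inv_nonneg.mpr hx.le) h₁), inv_mul_le_iff₀ hx]
  linarith

theorem abs_inv_mul_exp_neg_le {t x lam : ℝ} (ht : 0 ≤ t) (hlam : 0 < lam) (hx : x = 0 ∨ lam ≤ x) :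
    |x⁻¹ * Real.exp (-(t * x))| ≤ lam⁻¹ * Real.exp (-(t * lam)) := by
  rcases hx with rfl | hx
  · simp only [_root_.inv_zero, zero_mul, abs_zero]
    exact mul_nonneg (inv_nonneg.mpr hlam.le) (Real.exp_nonneg _)
  have hx₀ : 0 < x := hlam.trans_le hx
  rw [abs_of_nonneg (mul_nonneg (inv_nonneg.mpr hx₀.le) (Real.exp_nonneg _))]
  gcongr

theorem diffused_potential_robustness_general
    (n : ℕ) (W : Matrix (Fin n) (Fin n) ℝ)
    (hWsymm : W.IsSymm) (hWnonneg : ∀ i j, 0 ≤ W i j)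
    (L : Matrix (Fin n) (Fin n) ℝ)
    (hL : L = Matrix.diagonal (fun i => ∑ j, W i j) - W)
    (Ldag : Matrix (Fin n) (Fin n) ℝ)
    (hpen1 : L * Ldag * L = L) (hpen2 : Ldag * L * Ldag = Ldag)
    (hpen3 : (L * Ldag)ᵀ = L * Ldag) (hpen4 : (Ldag * L)ᵀ = Ldag * L)
    (lam : ℝ)
    (hlam : IsLeast {c : ℝ | 0 < c ∧ ∃ v : Fin n → ℝ, v ≠ 0 ∧ L.mulVec v = c • v} lam)
    (μ ν : Fin n → ℝ)
    (η : Fin n → ℝ)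
    (t : ℝ) (ht : 0 ≤ t)
    (ψ ψt : Fin n → ℝ)
    (hψ : ψ = Ldag.mulVec (μ - ν))
    (hψt : ψt = (Ldag * NormedSpace.exp (-(t • L))).mulVec (μ - ν + η)) :
    Real.sqrt (∑ i, (ψ i - ψt i) ^ 2)
      ≤ t * Real.sqrt (∑ i, (μ i - ν i) ^ 2)
        + lam⁻¹ * Real.exp (-(t * lam)) * Real.sqrt (∑ i, (η i) ^ 2) := by
  have hLpsd : L.PosSemidef := hL ▸ posSemidef_laplacian hWsymm hWnonneg
  have hLdag : Ldag = cfc (fun x : ℝ ↦ x⁻¹) L :=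
    IsMoorePenroseInverse.unique ⟨hpen1, hpen2, hpen3, hpen4⟩ (isMoorePenroseInverse_cfc_inv hLpsd.1)
  have hdiff : ψ - ψt = cfc (fun x ↦ x⁻¹ * (1 - Real.exp (-(t * x)))) L *ᵥ (μ - ν)
      - cfc (fun x ↦ x⁻¹ * Real.exp (-(t * x))) L *ᵥ η := by
    rw [hψ, hψt, hLdag, exp_neg_smul_eq_cfc hLpsd.1, cfc_mul_cfc, mulVec_add, ← sub_sub,
      ← sub_mulVec, ← cfc_sub _ _ L (L.finite_spectrum.continuousOn _)
        (L.finite_spectrum.continuousOn _)]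
    simp only [mul_sub, mul_one]
  have hbound₁ := norm_toLp_cfc_mulVec_le L ht
    (fun x hx ↦ abs_inv_mul_one_sub_exp_neg_le ht (hLpsd.nonneg_of_mem_spectrum hx)) (μ - ν)
  have hbound₂ := norm_toLp_cfc_mulVec_le L
    (mul_nonneg (inv_nonneg.mpr hlam.1.1.le) (Real.exp_nonneg _))
    (fun x hx ↦ abs_inv_mul_exp_neg_le ht hlam.1.1
      (hLpsd.eq_zero_or_le_of_mem_spectrum hlam.2 hx)) η
  have key : ‖WithLp.toLp 2 (ψ - ψt)‖
      ≤ t * ‖WithLp.toLp 2 (μ - ν)‖ + lam⁻¹ * Real.exp (-(t * lam)) * ‖WithLp.toLp 2 η‖ := by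
    rw [hdiff, WithLp.toLp_sub]
    exact (norm_sub_le _ _).trans (add_le_add hbound₁ hbound₂)
  simpa only [EuclideanSpace.norm_toLp_real, Pi.sub_apply] using key

/-- **robustness of diffused potentials.** Let `L = D - W` be the
Laplacian of a finite connected weighted undirected graph on `n ≥ 2` vertices (with `W`
the symmetric weighted adjacency matrix, nonnegative entries and zero diagonal), let
`Ldag` be its Moore–Penrose pseudoinverse, and let `lam > 0` be the smallest positive
eigenvalue of `L`. Let `μ, ν` be probability measures on the vertices, let `η` satisfy
`1ᵀη = 0`, and for `t ≥ 0` set `ψ = L†(μ-ν)` and `ψ̃_t = L† e^{-tL} (μ - ν + η)`. Then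
`‖ψ - ψ̃_t‖₂ ≤ t ‖μ-ν‖₂ + lam⁻¹ e^{-t·lam} ‖η‖₂`,
where `‖v‖₂ = √(Σ_i v_i²)` is the Euclidean norm. -/
theorem diffused_potential_robustness
    (n : ℕ) (hn : 2 ≤ n) (W : Matrix (Fin n) (Fin n) ℝ)
    (hWsymm : W.IsSymm) (hWnonneg : ∀ i j, 0 ≤ W i j) (hWdiag : ∀ i, W i i = 0)
    (hconn : (SimpleGraph.fromRel fun i j => W i j ≠ 0).Connected)
    (L : Matrix (Fin n) (Fin n) ℝ)
    (hL : L = Matrix.diagonal (fun i => ∑ j, W i j) - W)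
    (Ldag : Matrix (Fin n) (Fin n) ℝ)
    (hpen1 : L * Ldag * L = L) (hpen2 : Ldag * L * Ldag = Ldag)
    (hpen3 : (L * Ldag)ᵀ = L * Ldag) (hpen4 : (Ldag * L)ᵀ = Ldag * L)
    (lam : ℝ)
    (hlam : IsLeast {c : ℝ | 0 < c ∧ ∃ v : Fin n → ℝ, v ≠ 0 ∧ L.mulVec v = c • v} lam)
    (μ ν : Fin n → ℝ)
    (hμ : (∀ i, 0 ≤ μ i) ∧ ∑ i, μ i = 1)
    (hν : (∀ i, 0 ≤ ν i) ∧ ∑ i, ν i = 1)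
    (η : Fin n → ℝ) (hη : ∑ i, η i = 0)
    (t : ℝ) (ht : 0 ≤ t)
    (ψ ψt : Fin n → ℝ)
    (hψ : ψ = Ldag.mulVec (μ - ν))
    (hψt : ψt = (Ldag * NormedSpace.exp (-(t • L))).mulVec (μ - ν + η)) :
    Real.sqrt (∑ i, (ψ i - ψt i) ^ 2)
      ≤ t * Real.sqrt (∑ i, (μ i - ν i) ^ 2)
        + lam⁻¹ * Real.exp (-(t * lam)) * Real.sqrt (∑ i, (η i) ^ 2) :=
  diffused_potential_robustness_general n W hWsymm hWnonneg L hL Ldag hpen1 hpen2 hpen3 hpen4 lam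
    hlam μ ν η t ht ψ ψt hψ hψt
end
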